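/- arXiv:1906.10599 — 2 statements merged into one kernel-verified Lean document; each statement's English description precedes it below -/
import Mathlib

section
/- Let ρ₀ : [a,∞) → ℝ be continuous and positive, η(r) = ∫_a^r y ρ₀(y) dy, and r₀ = η⁻¹. Then for every x in the range of η, r₀(x) = √(a² + ∫₀ˣ 2/ρ₀(r₀(y)) dy), equivalently r₀(x)² = a² + 2∫₀ˣ τ₀(y) dy where τ₀(y) = 1/ρ₀(r₀(y)). -/
/-!
Since `r₀' = 1 / (r₀ ρ₀(r₀))`, the square `r₀²` has derivative `2 / ρ₀(r₀)`, so the fundamental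
theorem of calculus on `[0, x]` gives `r₀(x)² = r₀(0)² + ∫₀ˣ 2 / ρ₀(r₀)` with `r₀(0) = r₀(η a) = a`.
The derivative formula is available on all of `[0, x]` because `η` is continuous, so by the
intermediate value theorem `[0, x] ⊆ η '' [a, ∞)`; here `x ≥ 0` since `y ρ₀(y) ≥ 0` on `[a, ∞)`.
-/

open MeasureTheory Set

lemma Icc_zero_subset_image_primitive {g : ℝ → ℝ} {a r : ℝ} (hg : ContinuousOn g (Ici a))
    (har : a ≤ r) :
    Icc 0 (∫ y in a..r, g y) ⊆ (fun t => ∫ y in a..t, g y) '' Ici a := by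
  have hint : IntervalIntegrable g volume a r :=
    (hg.mono (by simpa [uIcc_of_le har] using Icc_subset_Ici_self)).intervalIntegrable
  have hcont : ContinuousOn (fun t => ∫ y in a..t, g y) (Icc a r) := by
    simpa [uIcc_of_le har] using
      intervalIntegral.continuousOn_primitive_interval' hint left_mem_uIcc
  simpa using (intermediate_value_Icc har hcont).trans (image_mono Icc_subset_Ici_self)

lemma hasDerivAt_sq_of_hasDerivAt_one_div_mul {f : ℝ → ℝ} {x c : ℝ}
    (hf : HasDerivAt f (1 / (f x * c)) x) (hfx : f x ≠ 0) :
    HasDerivAt (fun t => f t ^ 2) (2 / c) x := by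
  refine (hf.fun_pow 2).congr_deriv ?_
  field_simp
  ring

lemma sq_eq_sq_add_integral_of_hasDerivAt {f ρ : ℝ → ℝ} {s : Set ℝ} {u v : ℝ}
    (hρ : ContinuousOn ρ s) (hρ0 : ∀ y ∈ s, ρ y ≠ 0) (hmaps : MapsTo f (uIcc u v) s)
    (hf0 : ∀ y ∈ uIcc u v, f y ≠ 0)
    (hf : ∀ y ∈ uIcc u v, HasDerivAt f (1 / (f y * ρ (f y))) y) :
    f v ^ 2 = f u ^ 2 + ∫ y in u..v, 2 / ρ (f y) := by
  have hfcont : ContinuousOn f (uIcc u v) := fun y hy =>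
    (hf y hy).continuousAt.continuousWithinAt
  have hint : IntervalIntegrable (fun y => 2 / ρ (f y)) volume u v :=
    (continuousOn_const.div (hρ.comp hfcont hmaps) fun y hy => hρ0 _ (hmaps hy)).intervalIntegrable
  rw [intervalIntegral.integral_eq_sub_of_hasDerivAt
    (fun y hy => hasDerivAt_sq_of_hasDerivAt_one_div_mul (hf y hy) (hf0 y hy)) hint]
  ring

theorem stmt_5_general (a : ℝ) (ha : 0 < a) (ρ₀ η r₀ : ℝ → ℝ)
    (hcont : ContinuousOn ρ₀ (Set.Ici a)) (hpos : ∀ y ∈ Set.Ici a, 0 < ρ₀ y)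
    (hη : ∀ r, η r = ∫ y in a..r, y * ρ₀ y)
    (hinv : ∀ r ∈ Set.Ici a, r₀ (η r) = r)
    (hmem : ∀ x ∈ η '' Set.Ici a, r₀ x ∈ Set.Ici a)
    (hderiv : ∀ x ∈ η '' Set.Ici a,
      HasDerivAt r₀ (1 / (r₀ x * ρ₀ (r₀ x))) x) :
    ∀ x ∈ η '' Set.Ici a,
      r₀ x = Real.sqrt (a ^ 2 + ∫ y in (0:ℝ)..x, 2 / ρ₀ (r₀ y)) ∧
      r₀ x ^ 2 = a ^ 2 + 2 * ∫ y in (0:ℝ)..x, 1 / ρ₀ (r₀ y) := by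
  rintro x ⟨r, hr, rfl⟩
  have hr₀0 : r₀ 0 = a := by simpa [hη] using hinv a self_mem_Ici
  have hηr : 0 ≤ η r := by
    rw [hη]
    exact intervalIntegral.integral_nonneg hr fun y hy =>
      mul_nonneg (ha.le.trans hy.1) (hpos y hy.1).le
  have hsub : uIcc 0 (η r) ⊆ η '' Ici a := by
    rw [uIcc_of_le hηr, show η = _ from funext hη]
    exact Icc_zero_subset_image_primitive (continuousOn_id.mul hcont) hr
  have hsq := sq_eq_sq_add_integral_of_hasDerivAt hcont (fun y hy => (hpos y hy).ne')
    (fun y hy => hmem y (hsub hy)) (fun y hy => (ha.trans_le (hmem y (hsub hy))).ne')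
    (fun y hy => hderiv y (hsub hy))
  rw [hinv r hr, hr₀0] at hsq
  refine ⟨?_, ?_⟩
  · rw [hinv r hr, ← hsq, Real.sqrt_sq (ha.le.trans hr)]
  · simp only [hinv r hr, hsq, ← intervalIntegral.integral_const_mul, mul_one_div]

theorem stmt_5 (a : ℝ) (ha : 0 < a) (ρ₀ η r₀ : ℝ → ℝ)
    (hcont : ContinuousOn ρ₀ (Set.Ici a)) (hpos : ∀ y ∈ Set.Ici a, 0 < ρ₀ y)
    (hη : ∀ r, η r = ∫ y in a..r, y * ρ₀ y)
    (hmono : StrictMonoOn η (Set.Ici a)) (hηa : η a = 0)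
    (hinv : ∀ r ∈ Set.Ici a, r₀ (η r) = r)
    (hmem : ∀ x ∈ η '' Set.Ici a, r₀ x ∈ Set.Ici a)
    (hderiv : ∀ x ∈ η '' Set.Ici a,
      HasDerivAt r₀ (1 / (r₀ x * ρ₀ (r₀ x))) x) :
    ∀ x ∈ η '' Set.Ici a,
      r₀ x = Real.sqrt (a ^ 2 + ∫ y in (0:ℝ)..x, 2 / ρ₀ (r₀ y)) ∧
      r₀ x ^ 2 = a ^ 2 + 2 * ∫ y in (0:ℝ)..x, 1 / ρ₀ (r₀ y) :=
  stmt_5_general a ha ρ₀ η r₀ hcont hpos hη hinv hmem hderiv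
end

section
/- Let A be an n×n real matrix and S a symmetric positive definite matrix such that SA is symmetric. Then A is diagonalizable over ℝ: there is an invertible matrix L with rows consisting of left eigenvectors of A such that LA = D L for a real diagonal matrix D, and S = LᵀL for a suitable choice of L. -/
/-!
Write `S = Tᴴ T` with `T` invertible. The symmetry of `S A` says exactly that `T A T⁻¹` is
Hermitian, so `T A T⁻¹ = Vᴴ D V` with `V` unitary and `D` real diagonal. Then `L = V T` satisfies
`L A = D L` and `Lᴴ L = Tᴴ Vᴴ V T = S`.
-/

open Matrix
open scoped ComplexOrder

namespace Matrix

variable {𝕜 n : Type*} [RCLike 𝕜] [Fintype n] [DecidableEq n]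

theorem PosDef.exists_isUnit_eq_conjTranspose_mul_self {S : Matrix n n 𝕜} (hS : S.PosDef) :
    ∃ T : Matrix n n 𝕜, IsUnit T ∧ S = Tᴴ * T := by
  open scoped MatrixOrder in
  exact CStarAlgebra.isStrictlyPositive_iff_eq_star_mul_self.mp hS.isStrictlyPositive

theorem isHermitian_mul_mul_nonsing_inv {T A : Matrix n n 𝕜} (hT : IsUnit T)
    (hTA : (Tᴴ * T * A).IsHermitian) : (T * A * T⁻¹).IsHermitian := by
  have h : T * A * T⁻¹ = (T⁻¹)ᴴ * (Tᴴ * T * A) * T⁻¹ := by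
    rw [← Matrix.mul_assoc, ← Matrix.mul_assoc, ← conjTranspose_mul,
      mul_nonsing_inv T ((isUnit_iff_isUnit_det T).mp hT), conjTranspose_one, Matrix.one_mul]
  rw [h]
  exact isHermitian_conjTranspose_mul_mul _ hTA

theorem PosDef.exists_diagonalizing_factor {S A : Matrix n n 𝕜} (hS : S.PosDef)
    (hSA : (S * A).IsHermitian) :
    ∃ (L : Matrix n n 𝕜) (d : n → ℝ), IsUnit L ∧
      L * A = diagonal (RCLike.ofReal ∘ d) * L ∧ S = Lᴴ * L := by
  obtain ⟨T, hT, rfl⟩ := hS.exists_isUnit_eq_conjTranspose_mul_self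
  have hB := isHermitian_mul_mul_nonsing_inv hT hSA
  obtain ⟨V, hV, hVBV⟩ : ∃ V ∈ unitaryGroup n 𝕜,
      V * (T * A * T⁻¹) * star V = diagonal (RCLike.ofReal ∘ hB.eigenvalues) :=
    ⟨_, (star hB.eigenvectorUnitary).2, hB.conjStarAlgAut_star_eigenvectorUnitary⟩
  have hVV : star V * V = 1 := mem_unitaryGroup_iff'.mp hV
  refine ⟨V * T, hB.eigenvalues, (IsUnit.of_mul_eq_one_right _ hVV).mul hT, ?_, ?_⟩
  · rw [← hVBV]
    simp only [Matrix.mul_assoc]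
    rw [← Matrix.mul_assoc (star V), hVV, Matrix.one_mul,
      nonsing_inv_mul _ ((isUnit_iff_isUnit_det T).mp hT), Matrix.mul_one]
  · rw [conjTranspose_mul, ← star_eq_conjTranspose V, Matrix.mul_assoc,
      ← Matrix.mul_assoc (star V), hVV, Matrix.one_mul]

end Matrix

theorem stmt_11 (n : ℕ) (A S : Matrix (Fin n) (Fin n) ℝ)
    (hSsymm : Sᵀ = S) (hSpos : ∀ x : Fin n → ℝ, x ≠ 0 → 0 < x ⬝ᵥ S.mulVec x)
    (hSA : (S * A)ᵀ = S * A) :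
    ∃ L D : Matrix (Fin n) (Fin n) ℝ, IsUnit L ∧
      (∀ i j, i ≠ j → D i j = 0) ∧ L * A = D * L ∧ S = Lᵀ * L := by
  have hS : S.PosDef :=
    .of_dotProduct_mulVec_pos (by rwa [IsHermitian, conjTranspose_eq_transpose_of_trivial])
      fun x hx => by simpa only [star_trivial] using hSpos x hx
  obtain ⟨L, d, hL, hLA, hSL⟩ := hS.exists_diagonalizing_factor (A := A)
    (by rwa [IsHermitian, conjTranspose_eq_transpose_of_trivial])
  rw [RCLike.ofReal_real_eq_id, Function.id_comp] at hLA
  rw [conjTranspose_eq_transpose_of_trivial] at hSL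
  exact ⟨L, diagonal d, hL, fun i j hij => diagonal_apply_ne _ hij, hLA, hSL⟩
end
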